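/- arXiv:2503.07194 — 2 statements merged into one kernel-verified Lean document; each statement's English description precedes it below -/
import Mathlib

section
/- If F : A → A' is an exact functor between abelian categories that induces an equivalence A/C ≃ A' for a Serre subcategory C ⊆ A, then for every abelian category B, precomposition with F gives a fully faithful functor Fun_ex(A', B) → Fun_ex(A, B). -/
open CategoryTheory Limits

universe v u v' u' v'' u''

namespace PaperStmt

variable {A : Type u} [Category.{v} A] [Abelian A]

/-- A Serre subcategory of an abelian category, given as a predicate on objects:
a full subcategory (containing the zero objects) closed under subobjects,
quotients and extensions. -/
structure IsSerreSubcategory (P : A → Prop) : Prop where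
  of_isZero : ∀ (X : A), IsZero X → P X
  of_mono : ∀ {X Y : A} (f : X ⟶ Y), Mono f → P Y → P X
  of_epi : ∀ {X Y : A} (f : X ⟶ Y), Epi f → P X → P Y
  of_shortExact : ∀ (S : ShortComplex A), S.ShortExact → P S.X₁ → P S.X₃ → P S.X₂

/-- The class of morphisms whose kernel and cokernel both lie in `P`;
the Gabriel quotient `A/P` is the localisation of `A` at this class. -/
def serreW (P : A → Prop) : MorphismProperty A :=
  fun _ _ f => P (kernel f) ∧ P (cokernel f)

/-- A functor between abelian categories is exact if it preserves finite limits
and finite colimits. -/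
def ExactP {B : Type u'} [Category.{v'} B] [Abelian B] (F : A ⥤ B) : Prop :=
  Nonempty (PreservesFiniteLimits F) ∧ Nonempty (PreservesFiniteColimits F)

/-- The category of exact functors `A ⥤ B`. -/
abbrev ExactFunctorCat (A : Type u) [Category.{v} A] [Abelian A]
    (B : Type u') [Category.{v'} B] [Abelian B] :=
  ObjectProperty.FullSubcategory (fun F : A ⥤ B => ExactP F)

/-- Precomposition with an exact functor, as a functor between categories of
exact functors. -/
def precompose {A' : Type u'} [Category.{v'} A'] [Abelian A']
    (F : A ⥤ A') (hF : ExactP F)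
    (B : Type u'') [Category.{v''} B] [Abelian B] :
    ExactFunctorCat A' B ⥤ ExactFunctorCat A B :=
  ObjectProperty.lift _
    (ObjectProperty.ι _ ⋙ (Functor.whiskeringLeft A A' B).obj F)
    (fun G =>
      ⟨⟨by letI := hF.1.some; letI := G.2.1.some; exact comp_preservesFiniteLimits F G.obj⟩,
       ⟨by letI := hF.2.some; letI := G.2.2.some; exact comp_preservesFiniteColimits F G.obj⟩⟩)

/-- If `F : A ⥤ A'` is an exact functor between abelian categories
inducing an equivalence `A/P ≃ A'` for a Serre subcategory `P ⊆ A` (i.e. `F` is a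
localisation at the class of morphisms with kernel and cokernel in `P`), then for every
abelian category `B`, precomposition with `F` gives a fully faithful functor from exact
functors `A' ⥤ B` to exact functors `A ⥤ B`. -/
theorem statement1 {A' : Type u'} [Category.{v'} A'] [Abelian A']
    (F : A ⥤ A') (hF : ExactP F) (P : A → Prop) (hP : IsSerreSubcategory P)
    (hloc : F.IsLocalization (serreW P))
    (B : Type u'') [Category.{v''} B] [Abelian B] :
    (precompose F hF B).Full ∧ (precompose F hF B).Faithful := by
  have h1 : ((Functor.whiskeringLeft A A' B).obj F).Full :=
    Localization.full_whiskeringLeft F (serreW P) B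
  have h2 : ((Functor.whiskeringLeft A A' B).obj F).Faithful :=
    Localization.faithful_whiskeringLeft F (serreW P) B
  have hfull : (ObjectProperty.ι (fun G : A' ⥤ B => ExactP G) ⋙
      (Functor.whiskeringLeft A A' B).obj F).Full := Functor.Full.comp _ _
  have hfaith : (ObjectProperty.ι (fun G : A' ⥤ B => ExactP G) ⋙
      (Functor.whiskeringLeft A A' B).obj F).Faithful := Functor.Faithful.comp _ _
  have heq : precompose F hF B ⋙ ObjectProperty.ι _ =
      ObjectProperty.ι (fun G : A' ⥤ B => ExactP G) ⋙ (Functor.whiskeringLeft A A' B).obj F :=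
    rfl
  constructor
  · have : (precompose F hF B ⋙ ObjectProperty.ι _).Full := heq ▸ hfull
    exact Functor.Full.of_comp_faithful _ (ObjectProperty.ι _)
  · have : (precompose F hF B ⋙ ObjectProperty.ι _).Faithful := heq ▸ hfaith
    exact Functor.Faithful.of_comp _ (ObjectProperty.ι _)

end PaperStmt
end

section
/- Let F be a field, I a set of cardinality strictly larger than that of F and of every set in a fixed Grothendieck universe U containing F, and Λ = F⟨I⟩ the free algebra on I. Let A be the category of Λ-modules M admitting a submodule M' such that M' and M/M' are finite direct sums of copies of the trivial module F. Then A is an abelian category. -/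
open CategoryTheory Opposite
open scoped ModuleCat

universe u v

namespace PaperStmt

variable (F : Type u) [Field F] (I : Type v)

/-- The free (noncommutative polynomial) algebra `Λ = F⟨I⟩` on the set `I`. -/
abbrev Lam := FreeAlgebra F I

/-- The augmentation `Λ →ₐ F` sending every generator to `0`. -/
noncomputable def aug : Lam F I →ₐ[F] F := FreeAlgebra.lift F 0

/-- The carrier of the trivial `Λ`-module `F`. -/
def Triv (F : Type u) (I : Type v) : Type max u v := ULift.{v} F

instance : AddCommGroup (Triv F I) := by unfold Triv; infer_instance

instance : Module F (Triv F I) := by unfold Triv; infer_instance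

/-- The trivial `Λ`-module structure on `F`: each generator acts by zero. -/
noncomputable instance : Module (Lam F I) (Triv F I) :=
  Module.compHom (Triv F I) (aug F I).toRingHom

/-- The trivial `Λ`-module `F` as an object of the category of `Λ`-modules. -/
noncomputable def trivMod : ModuleCat.{max u v} (Lam F I) :=
  ModuleCat.of (Lam F I) (Triv F I)

/-- A `Λ`-module is a finite direct sum of copies of the trivial module `F` if it is
`Λ`-linearly equivalent to `Fin n → F` (with trivial action) for some `n`. -/
noncomputable def IsFinSumTriv (M : Type w) [AddCommGroup M]
    [Module (Lam F I) M] : Prop :=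
  ∃ n : ℕ, Nonempty (M ≃ₗ[Lam F I] (Fin n → Triv F I))

/-- The objects of the category `A`: the `Λ`-modules `M` admitting a submodule `M'`
such that `M'` and `M/M'` are finite direct sums of copies of the trivial
module `F`. -/
noncomputable def extP : ModuleCat.{max u v} (Lam F I) → Prop :=
  fun M => ∃ M' : Submodule (Lam F I) M,
    IsFinSumTriv F I M' ∧ IsFinSumTriv F I (M ⧸ M')

/-- The category `A`, as a full subcategory of the category of `Λ`-modules. -/
noncomputable def CatA := ObjectProperty.FullSubcategory (extP F I)

noncomputable instance : Category (CatA F I) := ObjectProperty.FullSubcategory.category _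

/-! Λ acts on a finite sum of copies of `F` through the augmentation, and conversely every
`Λ`-module on which Λ acts through the augmentation and which is finite-dimensional over `F`
is such a sum. Hence finite sums of copies of `F` are stable under submodules, quotients and
finite products, and so are their extensions: intersect the given filtration with a submodule,
or push it forward along a surjection. A full subcategory of an abelian category that contains
zero and is closed under subobjects, quotients and finite products is abelian. -/

section

open Limits

variable {F I}

instance : IsScalarTower F (Lam F I) (Triv F I) where
  smul_assoc c r t := by
    change aug F I (c • r) • t = c • aug F I r • t
    rw [map_smul, smul_eq_mul, mul_smul]

noncomputable def trivEquiv : Triv F I ≃ₗ[F] F := ULift.moduleEquiv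

instance : FiniteDimensional F (Triv F I) := .equiv trivEquiv.symm

theorem isFinSumTriv_of_finiteDimensional (M : Type*) [AddCommGroup M] [Module F M]
    [Module (Lam F I) M] [IsScalarTower F (Lam F I) M] [FiniteDimensional F M]
    (hM : ∀ (r : Lam F I) (m : M), r • m = aug F I r • m) : IsFinSumTriv F I M := by
  let e : M ≃ₗ[F] (Fin (Module.finrank F M) → Triv F I) :=
    (Module.finBasis F M).equivFun.trans (.piCongrRight fun _ => trivEquiv.symm)
  refine ⟨_, ⟨{ e with map_smul' := fun r m => ?_ }⟩⟩
  change e (r • m) = aug F I r • e m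
  rw [hM, map_smul]

variable (F I) in
theorem isFinSumTriv_pi (n : ℕ) : IsFinSumTriv F I (Fin n → Triv F I) :=
  ⟨n, ⟨.refl _ _⟩⟩

theorem isFinSumTriv_submodule_pi {n : ℕ} (N : Submodule (Lam F I) (Fin n → Triv F I)) :
    IsFinSumTriv F I N :=
  haveI : FiniteDimensional F N :=
    .of_injective (N.subtype.restrictScalars F) Subtype.val_injective
  isFinSumTriv_of_finiteDimensional N fun _ _ => rfl

theorem isFinSumTriv_quotient_pi {n : ℕ} (N : Submodule (Lam F I) (Fin n → Triv F I)) :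
    IsFinSumTriv F I ((Fin n → Triv F I) ⧸ N) :=
  haveI : FiniteDimensional F ((Fin n → Triv F I) ⧸ N) :=
    .of_surjective (N.mkQ.restrictScalars F) N.mkQ_surjective
  isFinSumTriv_of_finiteDimensional _ fun r m => by
    induction m using Submodule.Quotient.induction_on with
    | H x => rw [← Submodule.Quotient.mk_smul, ← Submodule.Quotient.mk_smul]; rfl

variable {A B : Type*} [AddCommGroup A] [AddCommGroup B] [Module (Lam F I) A]
  [Module (Lam F I) B]

theorem IsFinSumTriv.of_linearEquiv (e : A ≃ₗ[Lam F I] B) (hB : IsFinSumTriv F I B) :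
    IsFinSumTriv F I A :=
  let ⟨n, ⟨e'⟩⟩ := hB
  ⟨n, ⟨e.trans e'⟩⟩

theorem IsFinSumTriv.of_injective (hB : IsFinSumTriv F I B) (f : A →ₗ[Lam F I] B)
    (hf : Function.Injective f) : IsFinSumTriv F I A := by
  obtain ⟨n, ⟨e⟩⟩ := hB
  exact .of_linearEquiv (LinearEquiv.ofInjective (e.toLinearMap ∘ₗ f) (e.injective.comp hf))
    (isFinSumTriv_submodule_pi _)

theorem IsFinSumTriv.of_surjective (hA : IsFinSumTriv F I A) (f : A →ₗ[Lam F I] B)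
    (hf : Function.Surjective f) : IsFinSumTriv F I B := by
  obtain ⟨n, ⟨e⟩⟩ := hA
  exact .of_linearEquiv ((f ∘ₗ e.symm.toLinearMap).quotKerEquivOfSurjective
    (hf.comp e.symm.surjective)).symm (isFinSumTriv_quotient_pi _)

theorem IsFinSumTriv.prod (hA : IsFinSumTriv F I A) (hB : IsFinSumTriv F I B) :
    IsFinSumTriv F I (A × B) := by
  obtain ⟨m, ⟨eA⟩⟩ := hA
  obtain ⟨n, ⟨eB⟩⟩ := hB
  exact ⟨m + n, ⟨(eA.prodCongr eB).trans <|
    (LinearEquiv.sumArrowLequivProdArrow _ _ _ _).symm.trans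
      (LinearEquiv.funCongrLeft _ _ finSumFinEquiv.symm)⟩⟩

variable {M N : ModuleCat.{max u v} (Lam F I)}

theorem extP_of_injective (hM : extP F I M) (f : N →ₗ[Lam F I] M)
    (hf : Function.Injective f) : extP F I N := by
  obtain ⟨M', hM', hQ⟩ := hM
  refine ⟨M'.comap f, hM'.of_injective (f.restrict fun _ => id) ?_,
    hQ.of_injective ((M'.comap f).mapQ M' f le_rfl) ?_⟩
  · exact fun a b hab => Subtype.ext (hf congr($hab.1))
  · rw [← LinearMap.ker_eq_bot, Submodule.ker_mapQ, Submodule.mkQ_map_self]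

theorem extP_of_surjective (hM : extP F I M) (f : M →ₗ[Lam F I] N)
    (hf : Function.Surjective f) : extP F I N := by
  obtain ⟨M', hM', hQ⟩ := hM
  refine ⟨M'.map f, hM'.of_surjective _ (f.submoduleMap_surjective M'),
    hQ.of_surjective (M'.mapQ (M'.map f) f (Submodule.le_comap_map f M')) ?_⟩
  rw [← LinearMap.range_eq_top, Submodule.range_mapQ, LinearMap.range_eq_top.2 hf,
    Submodule.map_top, Submodule.range_mkQ]

theorem extP_prod (hM : extP F I M) (hN : extP F I N) :
    extP F I (ModuleCat.of (Lam F I) (M × N)) := by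
  obtain ⟨M', hM', hMQ⟩ := hM
  obtain ⟨N', hN', hNQ⟩ := hN
  refine ⟨M'.prod N', ?_, ?_⟩
  · let φ := M'.subtype.prodMap N'.subtype
    have hφ : Function.Injective φ :=
      Prod.map_injective.2 ⟨M'.injective_subtype, N'.injective_subtype⟩
    have hrange : LinearMap.range φ = M'.prod N' := by
      rw [LinearMap.range_prodMap, Submodule.range_subtype, Submodule.range_subtype]
    exact (hM'.prod hN').of_linearEquiv
      ((LinearEquiv.ofInjective φ hφ).trans (LinearEquiv.ofEq _ _ hrange)).symm
  · let ψ := M'.mkQ.prodMap N'.mkQ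
    have hψ : Function.Surjective ψ :=
      Prod.map_surjective.2 ⟨M'.mkQ_surjective, N'.mkQ_surjective⟩
    have hker : LinearMap.ker ψ = M'.prod N' := by
      rw [LinearMap.ker_prodMap, Submodule.ker_mkQ, Submodule.ker_mkQ]
    exact (hMQ.prod hNQ).of_linearEquiv
      ((Submodule.quotEquivOfEq _ _ hker.symm).trans (ψ.quotKerEquivOfSurjective hψ))

theorem extP_of_isFinSumTriv (hM : IsFinSumTriv F I M) : extP F I M :=
  ⟨⊥, hM.of_injective (⊥ : Submodule (Lam F I) M).subtype Subtype.val_injective,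
    hM.of_surjective _ (⊥ : Submodule (Lam F I) M).mkQ_surjective⟩

instance : ObjectProperty.ContainsZero (extP F I) where
  exists_zero := ⟨ModuleCat.of _ (Fin 0 → Triv F I), ModuleCat.isZero_of_subsingleton _,
    extP_of_isFinSumTriv (isFinSumTriv_pi F I 0)⟩

instance : ObjectProperty.IsClosedUnderSubobjects (extP F I) where
  prop_of_mono f hf hM := extP_of_injective hM f.hom ((ModuleCat.mono_iff_injective f).1 hf)

instance : ObjectProperty.IsClosedUnderQuotients (extP F I) where
  prop_of_epi f hf hM := extP_of_surjective hM f.hom ((ModuleCat.epi_iff_surjective f).1 hf)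

instance : ObjectProperty.IsClosedUnderBinaryProducts (extP F I) :=
  .mk' <| by
    rintro _ ⟨K, hK⟩
    exact ObjectProperty.prop_of_iso (extP F I)
      ((HasLimit.isoOfNatIso (diagramIsoPair K)).trans
        (limit.isoLimitCone (ModuleCat.binaryProductLimitCone _ _))).symm
      (extP_prod (hK _) (hK _))

instance : ObjectProperty.IsClosedUnderFiniteProducts (extP F I) := .mk'

end

noncomputable instance : Abelian (CatA F I) :=
  inferInstanceAs (Abelian (ObjectProperty.FullSubcategory (extP F I)))

theorem statement5 :
    Nonempty (Abelian (CatA F I)) := ⟨inferInstance⟩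

end PaperStmt
end
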